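/- Let D be a finite set, f ∈ D, n = |D|, and N_f = |{g ∈ D\{f} : C(f,g)}| the number of elements of D in conflict with f. Then the Shapley value of f with respect to I_MI is given by the closed form Shapley(D, I_MI, f) = (1/n!) · Σ_{i=1}^{N_f} Σ_{m=i}^{n−1} C(N_f, i) · C(n−N_f−1, m−i) · m! · (n−m−1)! · i. -/
import Mathlib


open scoped BigOperators Classical

variable {α : Type*} [DecidableEq α]

/-- The Shapley value of `f` in the cooperative game `v` over the set of players `D`. -/
noncomputable def Shapley (D : Finset α) (v : Finset α → ℝ) (f : α) : ℝ :=
  ∑ B ∈ (D \ {f}).powerset,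
    ((B.card.factorial * (D.card - B.card - 1).factorial : ℕ) : ℝ) / (D.card.factorial : ℝ) *
      (v (B ∪ {f}) - v B)

/-- The inconsistency measure `I_MI`: the number of unordered pairs of distinct
elements of `E` that are in conflict. -/
noncomputable def IMI (C : α → α → Prop) (E : Finset α) : ℕ :=
  ((E.powersetCard 2).filter fun P => ∃ g ∈ P, ∃ h ∈ P, g ≠ h ∧ C g h).card

open Finset in
lemma IMI_insert (C : α → α → Prop) (hsymm : Symmetric C) {f : α} {B : Finset α} (hf : f ∉ B) :
    IMI C (insert f B) = IMI C B + (B.filter fun g => C f g).card := by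
  classical
  unfold IMI
  rw [show (insert f B).powersetCard 2 = B.powersetCard 2 ∪ (B.powersetCard 1).image (insert f)
      from powersetCard_succ_insert hf 1]
  rw [filter_union, card_union_of_disjoint]
  · congr 1
    rw [powersetCard_one, map_eq_image, image_image, filter_image, card_image_of_injOn]
    · congr 1
      refine filter_congr fun g hg => ?_
      have hgf : g ≠ f := fun h => hf (h ▸ hg)
      constructor
      · rintro ⟨a, ha, b, hb, hab, hC⟩
        simp only [Function.comp, Function.Embedding.coeFn_mk, mem_insert, mem_singleton] at ha hb
        rcases ha with rfl | rfl <;> rcases hb with rfl | rfl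
        · exact absurd rfl hab
        · exact hC
        · exact hsymm hC
        · exact absurd rfl hab
      · intro hC
        exact ⟨f, by simp, g, by simp, fun h => hgf h.symm, hC⟩
    · intro a ha b hb hab
      simp only [Function.comp, Function.Embedding.coeFn_mk] at hab
      have : a ∈ insert f ({b} : Finset α) := by
        rw [← hab]; simp
      simp only [mem_insert, mem_singleton] at this
      rcases this with rfl | rfl
      · exact absurd (Finset.mem_of_mem_filter a ha) hf
      · rfl
  · rw [disjoint_left]
    intro P hP hP'
    have h1 : f ∉ P := fun hfP =>
      hf ((mem_powersetCard.1 (mem_of_mem_filter P hP)).1 hfP)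
    have h2 : f ∈ P := by
      rcases mem_image.1 (mem_of_mem_filter P hP') with ⟨Q, _, rfl⟩
      exact mem_insert_self f Q
    exact h1 h2

open Finset in
lemma sum_powerset_split (S M : Finset α) (hd : Disjoint S M) (F : Finset α → ℝ) :
    ∑ B ∈ (S ∪ M).powerset, F B = ∑ A ∈ S.powerset, ∑ B ∈ M.powerset, F (A ∪ B) := by
  rw [← Finset.sum_product']
  refine Finset.sum_nbij' (fun B => (B ∩ S, B ∩ M)) (fun p => p.1 ∪ p.2) ?_ ?_ ?_ ?_ ?_
  · intro B hB
    simp only [mem_product, mem_powerset]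
    exact ⟨inter_subset_right, inter_subset_right⟩
  · intro p hp
    simp only [mem_product, mem_powerset] at hp
    exact mem_powerset.2 (union_subset_union hp.1 hp.2)
  · intro B hB
    have hBsub := mem_powerset.1 hB
    simp only
    rw [← inter_union_distrib_left]
    exact (inter_eq_left.2 hBsub)
  · intro p hp
    simp only [mem_product, mem_powerset] at hp
    have h1 : (p.1 ∪ p.2) ∩ S = p.1 := by
      ext x
      simp only [mem_inter, mem_union]
      constructor
      · rintro ⟨hx1 | hx2, hxS⟩
        · exact hx1
        · exact absurd hxS (disjoint_left.1 hd.symm (hp.2 hx2))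
      · intro hx
        exact ⟨Or.inl hx, hp.1 hx⟩
    have h2 : (p.1 ∪ p.2) ∩ M = p.2 := by
      ext x
      simp only [mem_inter, mem_union]
      constructor
      · rintro ⟨hx1 | hx2, hxM⟩
        · exact absurd hxM (disjoint_left.1 hd (hp.1 hx1))
        · exact hx2
      · intro hx
        exact ⟨Or.inr hx, hp.2 hx⟩
    simp [h1, h2]
  · intro B hB
    simp only
    rw [← inter_union_distrib_left, inter_eq_left.2 (mem_powerset.1 hB)]

open Finset in
/-- Closed form for the Shapley value of a fact `f` with respect to `I_MI`,
where `N` is the number of elements of `D` in conflict with `f`. -/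
theorem shapley_IMI_closed_form (C : α → α → Prop) (hsymm : Symmetric C)
    (D : Finset α) (f : α) (hf : f ∈ D) (N : ℕ)
    (hN : N = ((D \ {f}).filter fun g => C f g).card) :
    Shapley D (fun E => (IMI C E : ℝ)) f =
      (1 / (D.card.factorial : ℝ)) *
        ∑ i ∈ Finset.Icc 1 N, ∑ m ∈ Finset.Icc i (D.card - 1),
          (N.choose i : ℝ) * ((D.card - N - 1).choose (m - i) : ℝ) *
            (m.factorial : ℝ) * ((D.card - m - 1).factorial : ℝ) * (i : ℝ) := by
  classical
  set n := D.card with hn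
  set T := D \ {f} with hT
  set S := T.filter (fun g => C f g) with hS
  set M := T \ S with hM
  have hST : S ⊆ T := filter_subset _ _
  have hUnion : S ∪ M = T := union_sdiff_of_subset hST
  have hdisj : Disjoint S M := disjoint_sdiff
  have hfT : f ∉ T := by simp [hT]
  have hn1 : 1 ≤ n := card_pos.2 ⟨f, hf⟩
  have hTcard : T.card = n - 1 := by
    rw [hT, card_sdiff_of_subset (by simpa using hf), card_singleton]
  have hNS : S.card = N := hN.symm
  have hNn : N ≤ n - 1 := by rw [← hNS, ← hTcard]; exact card_le_card hST
  have hMcard : M.card = n - N - 1 := by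
    rw [hM, card_sdiff_of_subset hST, hTcard, hNS]; omega
  -- Step A: marginal contribution
  have stepA : Shapley D (fun E => (IMI C E : ℝ)) f
      = ∑ B ∈ T.powerset,
          ((B.card.factorial * (n - B.card - 1).factorial : ℕ) : ℝ) / (n.factorial : ℝ) *
            ((B ∩ S).card : ℝ) := by
    unfold Shapley
    refine sum_congr rfl fun B hB => ?_
    have hBT : B ⊆ T := mem_powerset.1 hB
    have hfB : f ∉ B := fun h => hfT (hBT h)
    have h1 : B ∪ {f} = insert f B := by rw [union_comm, ← insert_eq]
    have h2 : B.filter (fun g => C f g) = B ∩ S := by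
      ext g
      simp only [mem_filter, mem_inter, hS]
      exact ⟨fun ⟨hg, hc⟩ => ⟨hg, hBT hg, hc⟩, fun ⟨hg, _, hc⟩ => ⟨hg, hc⟩⟩
    simp only [h1]
    rw [IMI_insert C hsymm hfB, ← h2]
    push_cast
    ring
  rw [stepA, ← hUnion,
    sum_powerset_split S M hdisj (fun B =>
      ((B.card.factorial * (n - B.card - 1).factorial : ℕ) : ℝ) / (n.factorial : ℝ) *
        ((B ∩ S).card : ℝ))]
  clear_value n T S M
  clear hn hT hS hM
  -- Step B: evaluate on pairs
  have stepB : ∀ A ∈ S.powerset, ∀ B ∈ M.powerset,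
      (((A ∪ B).card.factorial * (n - (A ∪ B).card - 1).factorial : ℕ) : ℝ) / (n.factorial : ℝ) *
        (((A ∪ B) ∩ S).card : ℝ)
      = (((A.card + B.card).factorial * (n - (A.card + B.card) - 1).factorial : ℕ) : ℝ) /
          (n.factorial : ℝ) * (A.card : ℝ) := by
    intro A hA B hB
    have hAS : A ⊆ S := mem_powerset.1 hA
    have hBM : B ⊆ M := mem_powerset.1 hB
    have hAB : Disjoint A B := hdisj.mono hAS hBM
    have hcard : (A ∪ B).card = A.card + B.card := card_union_of_disjoint hAB
    have hint : (A ∪ B) ∩ S = A := by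
      ext x
      simp only [mem_inter, mem_union]
      constructor
      · rintro ⟨hx1 | hx2, hxS⟩
        · exact hx1
        · exact absurd hxS (disjoint_left.1 hdisj.symm (hBM hx2))
      · intro hx
        exact ⟨Or.inl hx, hAS hx⟩
    rw [hcard, hint]
  rw [sum_congr rfl fun A hA => sum_congr rfl fun B hB => stepB A hA B hB]
  -- Step C: group by cardinalities
  have stepC : (∑ A ∈ S.powerset, ∑ B ∈ M.powerset,
        (((A.card + B.card).factorial * (n - (A.card + B.card) - 1).factorial : ℕ) : ℝ) /
          (n.factorial : ℝ) * (A.card : ℝ))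
      = ∑ i ∈ range (S.card + 1), (S.card.choose i : ℝ) *
          ∑ j ∈ range (M.card + 1), (M.card.choose j : ℝ) *
            ((((i + j).factorial * (n - (i + j) - 1).factorial : ℕ) : ℝ) / (n.factorial : ℝ) *
              (i : ℝ)) := by
    trans ∑ i ∈ range (S.card + 1), S.card.choose i •
        (∑ B ∈ M.powerset,
          (((i + B.card).factorial * (n - (i + B.card) - 1).factorial : ℕ) : ℝ) /
            (n.factorial : ℝ) * (i : ℝ))
    · exact Finset.sum_powerset_apply_card
        (fun i => ∑ B ∈ M.powerset,
          (((i + B.card).factorial * (n - (i + B.card) - 1).factorial : ℕ) : ℝ) /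
            (n.factorial : ℝ) * (i : ℝ))
    · refine sum_congr rfl fun i _ => ?_
      rw [nsmul_eq_mul]
      congr 1
      trans ∑ j ∈ range (M.card + 1), M.card.choose j •
          ((((i + j).factorial * (n - (i + j) - 1).factorial : ℕ) : ℝ) / (n.factorial : ℝ) *
            (i : ℝ))
      · exact Finset.sum_powerset_apply_card
          (fun j => (((i + j).factorial * (n - (i + j) - 1).factorial : ℕ) : ℝ) /
            (n.factorial : ℝ) * (i : ℝ))
      · exact sum_congr rfl fun j _ => nsmul_eq_mul _ _
  rw [stepC, hNS, hMcard]
  -- Step D: reindex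
  have stepD : ∀ i, i ≤ N →
      (N.choose i : ℝ) *
          (∑ j ∈ range ((n - N - 1) + 1), ((n - N - 1).choose j : ℝ) *
            ((((i + j).factorial * (n - (i + j) - 1).factorial : ℕ) : ℝ) / (n.factorial : ℝ) *
              (i : ℝ)))
      = (1 / (n.factorial : ℝ)) * ∑ m ∈ Finset.Icc i (n - 1),
          (N.choose i : ℝ) * ((n - N - 1).choose (m - i) : ℝ) *
            (m.factorial : ℝ) * ((n - m - 1).factorial : ℝ) * (i : ℝ) := by
    intro i hi
    have hrange : Finset.Icc i (n - 1) = Finset.Ico i n := by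
      rw [← Finset.Ico_add_one_right_eq_Icc]
      congr 1
      omega
    rw [hrange, Finset.sum_Ico_eq_sum_range]
    have hsub : range ((n - N - 1) + 1) ⊆ range (n - i) := by
      apply range_subset_range.2
      omega
    rw [← Finset.sum_subset hsub (fun j _ hj => ?_)]
    · rw [Finset.mul_sum, Finset.mul_sum]
      refine sum_congr rfl fun j _ => ?_
      rw [Nat.add_sub_cancel_left]
      push_cast
      ring
    · have hj' : (n - N - 1) < j := by
        simp only [mem_range] at *
        omega
      rw [Nat.add_sub_cancel_left, Nat.choose_eq_zero_of_lt hj']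
      simp
  rw [Finset.mul_sum]
  rw [sum_congr rfl fun i hi => stepD i (by simp only [mem_range] at hi; omega)]
  refine (Finset.sum_subset (fun i hi => ?_) (fun i hi hni => ?_)).symm
  · simp only [Finset.mem_Icc] at hi
    simp only [mem_range]
    omega
  · have hi0 : i = 0 := by
      simp only [Finset.mem_Icc, not_and, not_le] at hni
      simp only [mem_range] at hi
      omega
    subst hi0
    simp
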